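/- arXiv:2509.15668 — 5 statements merged into one kernel-verified Lean document; each statement's English description precedes it below -/
import Mathlib

section
/- Let U be a unitary matrix on C^N, V a column vector (isometry C → C^N), and Δ(z) a diagonal matrix whose entries are coordinates z_1,...,z_d of a point z in the open polydisk (each coordinate repeated according to a fixed block structure). Then the function φ(z) = 1 + 2 V* U (I - Δ(z)U)^{-1} Δ(z) V is well defined (I - Δ(z)U is invertible for z ∈ D^d), holomorphic on D^d, and satisfies Re φ(z) ≥ 0 for all z ∈ D^d. -/
open scoped BigOperators Matrix
open Matrix

private lemma dot_self_eq {N : ℕ} (v : Fin N → ℂ) :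
    dotProduct (star v) v = ((∑ k, ‖v k‖ ^ 2 : ℝ) : ℂ) := by
  simp only [dotProduct, Pi.star_apply, Complex.star_def, Complex.ofReal_sum]
  refine Finset.sum_congr rfl fun k _ => ?_
  rw [mul_comm, Complex.mul_conj, Complex.normSq_eq_norm_sq]

private lemma unitary_sum_sq {N : ℕ} {U : Matrix (Fin N) (Fin N) ℂ}
    (hU : U ∈ Matrix.unitaryGroup (Fin N) ℂ) (x : Fin N → ℂ) :
    ∑ k, ‖(U *ᵥ x) k‖ ^ 2 = ∑ k, ‖x k‖ ^ 2 := by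
  have h1 : star U * U = 1 := Matrix.mem_unitaryGroup_iff'.mp hU
  have := dot_self_eq (U *ᵥ x)
  rw [Matrix.star_mulVec, Matrix.dotProduct_mulVec, Matrix.vecMul_vecMul,
    ← Matrix.star_eq_conjTranspose, h1, Matrix.vecMul_one, dot_self_eq] at this
  exact_mod_cast this.symm

private lemma diag_sum_le {d N : ℕ} {z : Fin d → ℂ} (hz : ∀ i, ‖z i‖ < 1)
    (π : Fin N → Fin d) (w : Fin N → ℂ) :
    ∑ k, ‖(Matrix.diagonal (fun k => z (π k)) *ᵥ w) k‖ ^ 2 ≤ ∑ k, ‖w k‖ ^ 2 := by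
  refine Finset.sum_le_sum fun k _ => ?_
  rw [Matrix.mulVec_diagonal, norm_mul, mul_pow]
  have h1 : ‖z (π k)‖ ^ 2 ≤ 1 := by
    have := (hz (π k)).le
    nlinarith [norm_nonneg (z (π k))]
  nlinarith [norm_nonneg (w k), sq_nonneg (‖w k‖)]

private lemma diag_sum_lt {d N : ℕ} {z : Fin d → ℂ} (hz : ∀ i, ‖z i‖ < 1)
    (π : Fin N → Fin d) {w : Fin N → ℂ} (hw : w ≠ 0) :
    ∑ k, ‖(Matrix.diagonal (fun k => z (π k)) *ᵥ w) k‖ ^ 2 < ∑ k, ‖w k‖ ^ 2 := by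
  obtain ⟨k0, hk0⟩ := Function.ne_iff.mp hw
  refine Finset.sum_lt_sum (fun k _ => ?_) ⟨k0, Finset.mem_univ _, ?_⟩
  · rw [Matrix.mulVec_diagonal, norm_mul, mul_pow]
    have h1 : ‖z (π k)‖ ^ 2 ≤ 1 := by
      have := (hz (π k)).le
      nlinarith [norm_nonneg (z (π k))]
    nlinarith [norm_nonneg (w k), sq_nonneg (‖w k‖)]
  · rw [Matrix.mulVec_diagonal, norm_mul, mul_pow]
    have hk0' : w k0 ≠ 0 := hk0
    have h0 : (0:ℝ) < ‖w k0‖ ^ 2 := by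
      have := norm_pos_iff.mpr hk0'
      positivity
    have h1 : ‖z (π k0)‖ ^ 2 < 1 := by
      have := hz (π k0)
      nlinarith [norm_nonneg (z (π k0))]
    nlinarith

private lemma inv_lemma {d N : ℕ} {U : Matrix (Fin N) (Fin N) ℂ}
    (hU : U ∈ Matrix.unitaryGroup (Fin N) ℂ) (π : Fin N → Fin d)
    {z : Fin d → ℂ} (hz : ∀ i, ‖z i‖ < 1) :
    IsUnit (1 - Matrix.diagonal (fun k => z (π k)) * U) := by
  rw [Matrix.isUnit_iff_isUnit_det, isUnit_iff_ne_zero]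
  intro hdet
  obtain ⟨v, hv, h0⟩ := Matrix.exists_mulVec_eq_zero_iff.mpr hdet
  rw [Matrix.sub_mulVec, Matrix.one_mulVec, sub_eq_zero, ← Matrix.mulVec_mulVec] at h0
  have hUv : U *ᵥ v ≠ 0 := by
    intro h
    apply hv
    rw [h0, h, Matrix.mulVec_zero]
  have h1 := diag_sum_lt hz π hUv
  rw [← h0, unitary_sum_sq hU v] at h1
  exact lt_irrefl _ h1

private lemma diffOn_finset_prod {d : ℕ} {ι : Type*} (t : Finset ι)
    {s : Set (Fin d → ℂ)} {f : ι → (Fin d → ℂ) → ℂ}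
    (h : ∀ i ∈ t, DifferentiableOn ℂ (f i) s) :
    DifferentiableOn ℂ (fun z => ∏ i ∈ t, f i z) s := by
  classical
  induction t using Finset.induction_on with
  | empty => simp only [Finset.prod_empty]; exact differentiableOn_const (1 : ℂ)
  | @insert a t ha ih =>
      simp only [Finset.prod_insert ha]
      exact (h a (Finset.mem_insert_self a t)).mul
        (ih fun i hi => h i (Finset.mem_insert_of_mem hi))

private lemma diffOn_det {d N : ℕ} {s : Set (Fin d → ℂ)}
    {M : (Fin d → ℂ) → Matrix (Fin N) (Fin N) ℂ}
    (h : ∀ i j, DifferentiableOn ℂ (fun z => M z i j) s) :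
    DifferentiableOn ℂ (fun z => (M z).det) s := by
  simp only [Matrix.det_apply']
  exact DifferentiableOn.fun_sum fun σ _ =>
    ((diffOn_finset_prod Finset.univ fun i _ => h (σ i) i).const_mul _)

private lemma diffOn_adj {d N : ℕ} {s : Set (Fin d → ℂ)}
    {M : (Fin d → ℂ) → Matrix (Fin N) (Fin N) ℂ}
    (h : ∀ i j, DifferentiableOn ℂ (fun z => M z i j) s) (i j : Fin N) :
    DifferentiableOn ℂ (fun z => (M z).adjugate i j) s := by
  simp only [Matrix.adjugate_apply]
  refine diffOn_det fun i' j' => ?_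
  rcases eq_or_ne i' j with h' | h'
  · simp only [Matrix.updateRow_apply, h', if_true]
    exact differentiableOn_const _
  · simp only [Matrix.updateRow_apply, if_neg h']
    exact h i' j'

private lemma diffOn_inv {d N : ℕ} {s : Set (Fin d → ℂ)}
    {M : (Fin d → ℂ) → Matrix (Fin N) (Fin N) ℂ}
    (h : ∀ i j, DifferentiableOn ℂ (fun z => M z i j) s)
    (hdet : ∀ z ∈ s, (M z).det ≠ 0) (i j : Fin N) :
    DifferentiableOn ℂ (fun z => (M z)⁻¹ i j) s := by
  refine (((diffOn_det h).inv hdet).mul (diffOn_adj h i j)).congr fun z hz => ?_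
  rw [Matrix.inv_def, Matrix.smul_apply, Ring.inverse_eq_inv, smul_eq_mul, Pi.mul_apply, Pi.inv_apply]
/-- The realization formula `φ(z) = 1 + 2 V* U (I - Δ(z)U)⁻¹ Δ(z) V` defines a
holomorphic function on the polydisk with non-negative real part. -/
theorem realization_herglotz (d N : ℕ)
    (U : Matrix (Fin N) (Fin N) ℂ) (hU : U ∈ Matrix.unitaryGroup (Fin N) ℂ)
    (V : Fin N → ℂ) (hV : ∑ k, ‖V k‖ ^ 2 = 1)
    (π : Fin N → Fin d) :
    (∀ z ∈ {z : Fin d → ℂ | ∀ i, ‖z i‖ < 1},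
        IsUnit (1 - Matrix.diagonal (fun k => z (π k)) * U)) ∧
    DifferentiableOn ℂ
      (fun z : Fin d → ℂ =>
        1 + 2 * (dotProduct (star V)
          ((U * (1 - Matrix.diagonal (fun k => z (π k)) * U)⁻¹ *
            Matrix.diagonal (fun k => z (π k))).mulVec V)))
      {z : Fin d → ℂ | ∀ i, ‖z i‖ < 1} ∧
    ∀ z ∈ {z : Fin d → ℂ | ∀ i, ‖z i‖ < 1},
      0 ≤ (1 + 2 * (dotProduct (star V)
          ((U * (1 - Matrix.diagonal (fun k => z (π k)) * U)⁻¹ *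
            Matrix.diagonal (fun k => z (π k))).mulVec V))).re := by
  refine ⟨fun z hz => inv_lemma hU π hz, ?_, fun z hz => ?_⟩
  · -- differentiability
    set s : Set (Fin d → ℂ) := {z | ∀ i, ‖z i‖ < 1} with hsdef
    have hproj : ∀ i : Fin d, DifferentiableOn ℂ (fun z : Fin d → ℂ => z i) s := fun i =>
      (ContinuousLinearMap.proj i : (Fin d → ℂ) →L[ℂ] ℂ).differentiable.differentiableOn
    have hF : ∀ (i j : Fin N), DifferentiableOn ℂ
        (fun z : Fin d → ℂ => (1 - Matrix.diagonal (fun k => z (π k)) * U) i j) s := by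
      intro i j
      simp only [Matrix.sub_apply, Matrix.one_apply, Matrix.diagonal_mul]
      exact (differentiableOn_const _).sub ((hproj (π i)).mul (differentiableOn_const _))
    have hdet : ∀ z ∈ s, (1 - Matrix.diagonal (fun k => z (π k)) * U).det ≠ 0 := by
      intro z hz
      have h := inv_lemma hU π hz
      rw [Matrix.isUnit_iff_isUnit_det, isUnit_iff_ne_zero] at h
      exact h
    have hInv : ∀ i j : Fin N, DifferentiableOn ℂ
        (fun z : Fin d → ℂ => (1 - Matrix.diagonal (fun k => z (π k)) * U)⁻¹ i j) s :=
      diffOn_inv hF hdet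
    have hD : ∀ l j : Fin N, DifferentiableOn ℂ
        (fun z : Fin d → ℂ => Matrix.diagonal (fun k => z (π k)) l j) s := by
      intro l j
      rcases eq_or_ne l j with h' | h'
      · subst h'
        simp only [Matrix.diagonal_apply_eq]
        exact hproj (π l)
      · simp only [Matrix.diagonal_apply_ne _ h']
        exact differentiableOn_const _
    simp only [dotProduct, Matrix.mulVec, Matrix.mul_apply]
    refine (differentiableOn_const _).add (DifferentiableOn.const_mul ?_ _)
    refine DifferentiableOn.fun_sum fun k _ => DifferentiableOn.const_mul ?_ _
    refine DifferentiableOn.fun_sum fun j _ => DifferentiableOn.mul_const ?_ _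
    refine DifferentiableOn.fun_sum fun l _ => DifferentiableOn.mul ?_ (hD l j)
    exact DifferentiableOn.fun_sum fun m _ => (hInv m l).const_mul _
  · -- positivity
    have hz' : ∀ i, ‖z i‖ < 1 := hz
    set Δ : Matrix (Fin N) (Fin N) ℂ := Matrix.diagonal (fun k => z (π k)) with hΔ
    have hunit := inv_lemma hU π hz'
    have hdetu : IsUnit (1 - Δ * U).det := (Matrix.isUnit_iff_isUnit_det _).mp hunit
    set y : Fin N → ℂ := (1 - Δ * U)⁻¹ *ᵥ (Δ *ᵥ V) with hy
    have hXV : (U * (1 - Δ * U)⁻¹ * Δ) *ᵥ V = U *ᵥ y := by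
      rw [hy, Matrix.mulVec_mulVec, Matrix.mulVec_mulVec, Matrix.mul_assoc]
    set w : Fin N → ℂ := U *ᵥ y + V with hwdef
    have hyw : y = Δ *ᵥ w := by
      have h1 : (1 - Δ * U) *ᵥ y = Δ *ᵥ V := by
        rw [hy, Matrix.mulVec_mulVec, Matrix.mul_nonsing_inv _ hdetu, Matrix.one_mulVec]
      rw [Matrix.sub_mulVec, Matrix.one_mulVec, sub_eq_iff_eq_add] at h1
      calc y = Δ *ᵥ V + (Δ * U) *ᵥ y := h1
        _ = Δ *ᵥ w := by
            rw [hwdef, Matrix.mulVec_add, ← Matrix.mulVec_mulVec, add_comm]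
    have hSU : ∑ k, ‖(U *ᵥ y) k‖ ^ 2 = ∑ k, ‖y k‖ ^ 2 := unitary_sum_sq hU y
    have hSw : ∑ k, ‖y k‖ ^ 2 ≤ ∑ k, ‖w k‖ ^ 2 := by
      rw [hyw]; exact diag_sum_le hz' π w
    have hstar : star (dotProduct (star V) (U *ᵥ y))
          + dotProduct (star V) (U *ᵥ y)
        = ((2 * (dotProduct (star V) (U *ᵥ y)).re : ℝ) : ℂ) := by
      rw [Complex.star_def, add_comm, Complex.add_conj]
    have hdotc : ((∑ k, ‖w k‖ ^ 2 : ℝ) : ℂ)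
        = ↑(∑ k, ‖(U *ᵥ y) k‖ ^ 2) + ↑(∑ k, ‖V k‖ ^ 2)
          + (star (dotProduct (star V) (U *ᵥ y))
              + dotProduct (star V) (U *ᵥ y)) := by
      rw [← dot_self_eq, ← dot_self_eq, ← dot_self_eq, ← Matrix.star_dotProduct, hwdef]
      simp only [star_add, add_dotProduct, dotProduct_add]
      ring
    rw [hstar, ← Complex.ofReal_add, ← Complex.ofReal_add, Complex.ofReal_inj] at hdotc
    have hphi : (1 + 2 * dotProduct (star V) (U *ᵥ y)).re
        = 1 + 2 * (dotProduct (star V) (U *ᵥ y)).re := by simp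
    rw [hXV, hphi]
    linarith [hdotc, hSU, hSw, hV]
end

section
/- Let g, h : D → C be holomorphic, p ∈ C_{n₁}[z], q ∈ C_{n₂}[w] with g(z) z^{n₁} conj(p(1/conj z)) = λ p(z) + R(z) and h(w) w^{n₂} conj(q(1/conj w)) = σ q(w) + S(w), where R, S contain only powers z^k with k > n₁ resp. w^k with k > n₂ (and λ, σ ≥ 0). Then for f(z,w) = g(z)h(w) and n = (n₁,n₂), the product p(z)q(w) satisfies T_n C_n (p(z)q(w)) = λσ · p(z)q(w), i.e., λσ is an anti-linear eigenvalue of the two-variable Takagi–Pfister problem with eigenfunction p⊗q. -/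
open scoped BigOperators

/-- Tensor products of one-variable Takagi–Pfister eigenfunctions are
eigenfunctions of the two-variable problem for the product symbol
`f(z,w) = g(z)h(w)`, with eigenvalue `λσ`. Everything is phrased in the
coefficient model, where `gc, hc` are the Taylor coefficients of `g, h`. -/
theorem takagi_pfister_tensor (n₁ n₂ : ℕ) (g h : ℂ → ℂ)
    (gc hc : ℕ → ℂ)
    (hg : ∀ z : ℂ, ‖z‖ < 1 → HasSum (fun k => gc k * z ^ k) (g z))
    (hh : ∀ w : ℂ, ‖w‖ < 1 → HasSum (fun k => hc k * w ^ k) (h w))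
    (lam sig : ℝ) (hlam : 0 ≤ lam) (hsig : 0 ≤ sig)
    (p : Fin (n₁ + 1) → ℂ) (q : Fin (n₂ + 1) → ℂ)
    (hp : ∀ j : Fin (n₁ + 1),
      (∑ k : Fin (n₁ + 1), (if (k : ℕ) ≤ (j : ℕ) then gc ((j : ℕ) - (k : ℕ)) else 0) *
        (starRingEnd ℂ) (p k.rev)) = (lam : ℂ) * p j)
    (hq : ∀ l : Fin (n₂ + 1),
      (∑ i : Fin (n₂ + 1), (if (i : ℕ) ≤ (l : ℕ) then hc ((l : ℕ) - (i : ℕ)) else 0) *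
        (starRingEnd ℂ) (q i.rev)) = (sig : ℂ) * q l) :
    ∀ (j : Fin (n₁ + 1)) (l : Fin (n₂ + 1)),
      (∑ k : Fin (n₁ + 1), ∑ i : Fin (n₂ + 1),
        (if (k : ℕ) ≤ (j : ℕ) ∧ (i : ℕ) ≤ (l : ℕ) then
            gc ((j : ℕ) - (k : ℕ)) * hc ((l : ℕ) - (i : ℕ)) else 0) *
          (starRingEnd ℂ) (p k.rev * q i.rev)) =
        ((lam : ℂ) * (sig : ℂ)) * (p j * q l) := by
  intro j l
  have key : ∀ (k : Fin (n₁ + 1)) (i : Fin (n₂ + 1)),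
      (if (k : ℕ) ≤ (j : ℕ) ∧ (i : ℕ) ≤ (l : ℕ) then
          gc ((j : ℕ) - (k : ℕ)) * hc ((l : ℕ) - (i : ℕ)) else 0) *
        (starRingEnd ℂ) (p k.rev * q i.rev)
      = ((if (k : ℕ) ≤ (j : ℕ) then gc ((j : ℕ) - (k : ℕ)) else 0) *
          (starRingEnd ℂ) (p k.rev)) *
        ((if (i : ℕ) ≤ (l : ℕ) then hc ((l : ℕ) - (i : ℕ)) else 0) *
          (starRingEnd ℂ) (q i.rev)) := by
    intro k i
    rw [map_mul]
    by_cases hk : (k : ℕ) ≤ (j : ℕ) <;> by_cases hi : (i : ℕ) ≤ (l : ℕ) <;>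
      simp [hk, hi] <;> ring
  calc (∑ k : Fin (n₁ + 1), ∑ i : Fin (n₂ + 1),
        (if (k : ℕ) ≤ (j : ℕ) ∧ (i : ℕ) ≤ (l : ℕ) then
            gc ((j : ℕ) - (k : ℕ)) * hc ((l : ℕ) - (i : ℕ)) else 0) *
          (starRingEnd ℂ) (p k.rev * q i.rev))
      = (∑ k : Fin (n₁ + 1), (if (k : ℕ) ≤ (j : ℕ) then gc ((j : ℕ) - (k : ℕ)) else 0) *
          (starRingEnd ℂ) (p k.rev)) *
        (∑ i : Fin (n₂ + 1), (if (i : ℕ) ≤ (l : ℕ) then hc ((l : ℕ) - (i : ℕ)) else 0) *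
          (starRingEnd ℂ) (q i.rev)) := by
        rw [Finset.sum_mul_sum]
        exact Finset.sum_congr rfl fun k _ => Finset.sum_congr rfl fun i _ => key k i
    _ = ((lam : ℂ) * p j) * ((sig : ℂ) * q l) := by rw [hp j, hq l]
    _ = ((lam : ℂ) * (sig : ℂ)) * (p j * q l) := by ring
end

section
/- For the Schur function f(z,w) = (z+w)/2 on the bidisk and n = (1,1): the polynomial p(z,w) = (z+w)/2 + zw/√2 satisfies T_n C_n p = (1/√2) p, with C_n p = p*(z,w) = (z+w)/2 + 1/√2; moreover p* has zeros inside the bidisk D², and 1/√2 is the largest anti-linear eigenvalue. -/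
open scoped BigOperators

/-- Taylor coefficients of the symbol `f(z,w) = (z+w)/2`. -/
noncomputable def exCoeff : ℕ → ℕ → ℂ :=
  fun a b => if (a = 1 ∧ b = 0) ∨ (a = 0 ∧ b = 1) then (1 / 2 : ℂ) else 0

/-- The anti-linear operator `T_n C_n` for `f(z,w) = (z+w)/2` and `n = (1,1)`,
in the coefficient model on `span{1, z, w, zw}`. -/
noncomputable def exTC (a : Fin 2 × Fin 2 → ℂ) : Fin 2 × Fin 2 → ℂ :=
  fun β => ∑ α : Fin 2 × Fin 2,
    (if (α.1 : ℕ) ≤ (β.1 : ℕ) ∧ (α.2 : ℕ) ≤ (β.2 : ℕ) then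
        exCoeff ((β.1 : ℕ) - (α.1 : ℕ)) ((β.2 : ℕ) - (α.2 : ℕ)) else 0) *
      (starRingEnd ℂ) (a (α.1.rev, α.2.rev))

/-- Coefficients of `p(z,w) = (z+w)/2 + zw/√2`. -/
noncomputable def exP : Fin 2 × Fin 2 → ℂ :=
  fun x => if x = (1, 0) ∨ x = (0, 1) then (1 / 2 : ℂ)
    else if x = (1, 1) then ((Real.sqrt 2)⁻¹ : ℝ) else 0

lemma exTC00 (a : Fin 2 × Fin 2 → ℂ) : exTC a (0,0) = 0 := by
  simp [exTC, Fintype.sum_prod_type, Fin.sum_univ_two, exCoeff]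

lemma exTC10 (a : Fin 2 × Fin 2 → ℂ) : exTC a (1,0) = (1/2) * (starRingEnd ℂ) (a (1,1)) := by
  simp [exTC, Fintype.sum_prod_type, Fin.sum_univ_two, exCoeff]

lemma exTC01 (a : Fin 2 × Fin 2 → ℂ) : exTC a (0,1) = (1/2) * (starRingEnd ℂ) (a (1,1)) := by
  simp [exTC, Fintype.sum_prod_type, Fin.sum_univ_two, exCoeff]

lemma exTC11 (a : Fin 2 × Fin 2 → ℂ) : exTC a (1,1) =
    (1/2) * (starRingEnd ℂ) (a (1,0)) + (1/2) * (starRingEnd ℂ) (a (0,1)) := by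
  simp [exTC, Fintype.sum_prod_type, Fin.sum_univ_two, exCoeff]

lemma exP00 : exP (0,0) = 0 := by
  unfold exP; rw [if_neg (by decide), if_neg (by decide)]
lemma exP10 : exP (1,0) = 1/2 := by unfold exP; rw [if_pos (Or.inl rfl)]
lemma exP01 : exP (0,1) = 1/2 := by unfold exP; rw [if_pos (Or.inr rfl)]
lemma exP11 : exP (1,1) = ((Real.sqrt 2)⁻¹ : ℝ) := by
  unfold exP; rw [if_neg (by decide), if_pos rfl]

lemma sqrt2_mul : (((Real.sqrt 2)⁻¹ : ℝ) : ℂ) * (((Real.sqrt 2)⁻¹ : ℝ) : ℂ) = 1/2 := by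
  rw [← Complex.ofReal_mul, ← mul_inv, Real.mul_self_sqrt (by norm_num : (0:ℝ) ≤ 2)]
  norm_num

lemma four_cases (β : Fin 2 × Fin 2) :
    β = (0,0) ∨ β = (1,0) ∨ β = (0,1) ∨ β = (1,1) := by
  obtain ⟨b1, b2⟩ := β; fin_cases b1 <;> fin_cases b2 <;> decide

lemma conj_half : (starRingEnd ℂ) (1/2) = 1/2 := by
  rw [map_div₀, map_one, map_ofNat]

lemma eig : exTC exP = fun β => (((Real.sqrt 2)⁻¹ : ℝ) : ℂ) * exP β := by
  funext β
  rcases four_cases β with h | h | h | h <;> subst h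
  · rw [exTC00, exP00, mul_zero]
  · rw [exTC10, exP11, exP10, Complex.conj_ofReal]; ring
  · rw [exTC01, exP11, exP01, Complex.conj_ofReal]; ring
  · rw [exTC11, exP10, exP01, exP11, conj_half, sqrt2_mul]; ring

/-- For `f(z,w) = (z+w)/2` on the bidisk and `n = (1,1)`:
`p(z,w) = (z+w)/2 + zw/√2` is an anti-linear eigenfunction with eigenvalue
`1/√2`, its reflection is `p*(z,w) = (z+w)/2 + 1/√2`, `p*` vanishes inside the
bidisk, and `1/√2` is the largest anti-linear eigenvalue. -/
theorem takagi_pfister_example :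
    (exTC exP = fun β => (((Real.sqrt 2)⁻¹ : ℝ) : ℂ) * exP β) ∧
    (∀ β : Fin 2 × Fin 2, (starRingEnd ℂ) (exP (β.1.rev, β.2.rev)) =
      (if β = (1, 0) ∨ β = (0, 1) then (1 / 2 : ℂ)
        else if β = (0, 0) then ((Real.sqrt 2)⁻¹ : ℝ) else 0)) ∧
    (∃ z w : ℂ, ‖z‖ < 1 ∧ ‖w‖ < 1 ∧
      (z + w) / 2 + (((Real.sqrt 2)⁻¹ : ℝ) : ℂ) = 0) ∧
    IsGreatest {s : ℝ | 0 ≤ s ∧ ∃ a : Fin 2 × Fin 2 → ℂ, a ≠ 0 ∧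
        exTC a = fun β => (s : ℂ) * a β} ((Real.sqrt 2)⁻¹) := by

  have h2 : (0:ℝ) < Real.sqrt 2 := Real.sqrt_pos.mpr (by norm_num)
  have hnorm : ‖((-(Real.sqrt 2)⁻¹ : ℝ) : ℂ)‖ < 1 := by
    rw [Complex.norm_real, Real.norm_eq_abs, abs_neg, abs_inv, abs_of_pos h2,
      inv_lt_one_iff₀]
    right
    nlinarith [Real.sq_sqrt (by norm_num : (0:ℝ) ≤ 2)]
  refine ⟨eig, ?_, ?_, ?_⟩
  · intro β
    rcases four_cases β with h | h | h | h <;> subst h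
    · rw [if_neg (by decide), if_pos rfl]
      show (starRingEnd ℂ) (exP (1,1)) = _
      rw [exP11, Complex.conj_ofReal]
    · rw [if_pos (Or.inl rfl)]
      show (starRingEnd ℂ) (exP (0,1)) = _
      rw [exP01, conj_half]
    · rw [if_pos (Or.inr rfl)]
      show (starRingEnd ℂ) (exP (1,0)) = _
      rw [exP10, conj_half]
    · rw [if_neg (by decide), if_neg (by decide)]
      show (starRingEnd ℂ) (exP (0,0)) = _
      rw [exP00, map_zero]
  · exact ⟨(-(Real.sqrt 2)⁻¹ : ℝ), (-(Real.sqrt 2)⁻¹ : ℝ), hnorm, hnorm, by push_cast; ring⟩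
  · constructor
    · exact ⟨le_of_lt (inv_pos.mpr h2), exP, by
        intro h
        have := congrFun h (1,0)
        rw [exP10] at this
        norm_num at this, eig⟩
    · rintro s ⟨hs0, a, ha, hT⟩
      by_contra hlt
      push_neg at hlt
      have hspos : 0 < s := lt_of_le_of_lt (le_of_lt (inv_pos.mpr h2)) hlt
      have hsC : (s:ℂ) ≠ 0 := by exact_mod_cast ne_of_gt hspos
      have h00 : (s:ℂ) * a (0,0) = 0 := by
        have := congrFun hT (0,0); rw [exTC00] at this; linear_combination -this
      have h10 : (s:ℂ) * a (1,0) = (1/2) * (starRingEnd ℂ) (a (1,1)) := by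
        have := congrFun hT (1,0); rw [exTC10] at this; linear_combination -this
      have h01 : (s:ℂ) * a (0,1) = (1/2) * (starRingEnd ℂ) (a (1,1)) := by
        have := congrFun hT (0,1); rw [exTC01] at this; linear_combination -this
      have h11 : (s:ℂ) * a (1,1) =
          (1/2) * (starRingEnd ℂ) (a (1,0)) + (1/2) * (starRingEnd ℂ) (a (0,1)) := by
        have := congrFun hT (1,1); rw [exTC11] at this; linear_combination -this
      have c10 : (s:ℂ) * (starRingEnd ℂ) (a (1,0)) = (1/2) * a (1,1) := by
        have := congr_arg (starRingEnd ℂ) h10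
        rw [map_mul, map_mul, Complex.conj_conj, Complex.conj_ofReal, conj_half] at this
        exact this
      have c01 : (s:ℂ) * (starRingEnd ℂ) (a (0,1)) = (1/2) * a (1,1) := by
        have := congr_arg (starRingEnd ℂ) h01
        rw [map_mul, map_mul, Complex.conj_conj, Complex.conj_ofReal, conj_half] at this
        exact this
      have key : ((s:ℂ)^2 - 1/2) * a (1,1) = 0 := by
        linear_combination (s:ℂ) * h11 + (1/2:ℂ) * c10 + (1/2:ℂ) * c01
      have hs2 : (s:ℂ)^2 - 1/2 ≠ 0 := by
        have hlt2 : (1:ℝ)/2 < s^2 := by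
          have h12 : ((Real.sqrt 2)⁻¹)^2 = 1/2 := by
            rw [inv_pow, Real.sq_sqrt (by norm_num : (0:ℝ) ≤ 2)]; norm_num
          calc (1:ℝ)/2 = ((Real.sqrt 2)⁻¹)^2 := h12.symm
            _ < s^2 := by
                apply pow_lt_pow_left₀ hlt (le_of_lt (inv_pos.mpr h2))
                norm_num
        intro h
        have hc := sub_eq_zero.mp h
        have hr : (s^2 : ℝ) = 1/2 := by
          have h' : ((s^2 : ℝ) : ℂ) = (((1:ℝ)/2 : ℝ) : ℂ) := by push_cast; exact hc
          exact_mod_cast h'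
        linarith
      have a11 : a (1,1) = 0 := (mul_eq_zero.mp key).resolve_left hs2
      have a10 : a (1,0) = 0 := by
        rw [a11, map_zero, mul_zero] at h10
        exact (mul_eq_zero.mp h10).resolve_left hsC
      have a01 : a (0,1) = 0 := by
        rw [a11, map_zero, mul_zero] at h01
        exact (mul_eq_zero.mp h01).resolve_left hsC
      have a00 : a (0,0) = 0 := (mul_eq_zero.mp h00).resolve_left hsC
      apply ha
      funext β
      rcases four_cases β with h | h | h | h <;> subst h <;>
        simp only [a00, a10, a01, a11, Pi.zero_apply]
end

section
/- Let c₀₁, c₁₀, c₁₁ ∈ C satisfy 2|c₁₁ - c₁₀c₀₁| + |c₁₀|² + |c₀₁|² ≤ 4 and |c₁₀| + |c₀₁| ≤ 2, with |c₀₁|² + |c₁₀|² < 4. Set σ = 2(c₁₁ - c₁₀c₀₁)/(4 - |c₁₀|² - |c₀₁|²) and g(z,w) = (c₁₀z/2 + c₀₁w/2 + σzw)/(1 + σ(conj(c₀₁)z/2 + conj(c₁₀)w/2)). Then g is holomorphic on the bidisk D² with |g| ≤ 1 there, and φ = (1+g)/(1-g) is a Herglotz–Nevanlinna function on D² with Taylor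 expansion φ = 1 + c₀₁w + c₁₀z + c₁₁zw + higher order terms. -/
open scoped ComplexConjugate

lemma K11_aux_real (s t r x : ℝ) (hs0 : 0 ≤ s) (hs : s ≤ 1) (ht0 : 0 ≤ t)
    (ht : t ≤ r) (hr : r ≤ 1) (hx : -(s*t) ≤ x) :
    r^4*s^2 + t^2 + 2*(r^2*x) + (1-r^2)*(1-r*s)^2 ≤ 1 + s^2*t^2 + 2*x := by
  nlinarith [mul_nonneg (mul_nonneg hs0 (sub_nonneg.2 ht)) (sub_nonneg.2 (by nlinarith : r^2 ≤ 1)),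
    mul_nonneg (sub_nonneg.2 (by nlinarith : t^2 ≤ r^2)) (sub_nonneg.2 (by nlinarith : s^2 ≤ 1)),
    mul_nonneg (sub_nonneg.2 (by nlinarith : r^2 ≤ 1)) (sub_nonneg.2 hx)]

lemma K11_num_eq (a b σ z w : ℂ) (r : ℝ) (hz : ‖z‖ = r) (hw : ‖w‖ = r) (hr : 0 < r) :
    ‖a*z + b*w + σ*z*w‖ = ‖σ*(r:ℂ)^2 + conj (conj b * z + conj a * w)‖ := by
  have hzz : z * conj z = ((r:ℂ))^2 := by
    rw [Complex.mul_conj]; rw [Complex.normSq_eq_norm_sq, hz]; push_cast; ring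
  have hww : w * conj w = ((r:ℂ))^2 := by
    rw [Complex.mul_conj]; rw [Complex.normSq_eq_norm_sq, hw]; push_cast; ring
  have key : (z*w) * conj (a*z + b*w + σ*z*w)
      = ((r:ℂ))^2 * conj (σ*(r:ℂ)^2 + conj (conj b * z + conj a * w)) := by
    simp only [map_add, map_mul, Complex.conj_conj, map_pow, Complex.conj_ofReal]
    linear_combination (conj a * w) * hzz + (conj b * z) * hww
      + conj σ * (w * conj w) * hzz + conj σ * ((r:ℂ))^2 * hww
  have := congrArg norm key
  simp only [norm_mul, RCLike.norm_conj, hz, hw] at this ⊢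
  have h2 : ‖((r:ℂ))^2‖ = r^2 := by simp [abs_of_nonneg hr.le]
  rw [h2] at this
  rw [show r*r = r^2 by ring] at this
  exact mul_left_cancel₀ (by positivity : (r^2:ℝ) ≠ 0) this

lemma K11_one_var (σ q : ℂ) (r : ℝ) (hr0 : 0 ≤ r) (hs : ‖σ‖ ≤ 1) (hq : ‖q‖ ≤ r) (hr : r ≤ 1) :
    ‖σ*(r:ℂ)^2 + conj q‖^2 + (1-r^2)*(1-r*‖σ‖)^2 ≤ ‖1 + σ*q‖^2 := by
  have e1 : ‖σ*(r:ℂ)^2 + conj q‖^2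
      = r^4*‖σ‖^2 + ‖q‖^2 + 2*(r^2*(σ*q).re) := by
    simp only [Complex.sq_norm, Complex.normSq_add, Complex.normSq_mul,
      Complex.conj_conj, Complex.normSq_conj, map_pow, Complex.normSq_ofReal]
    have h5 : (σ * (r:ℂ)^2 * q).re = r^2 * (σ*q).re := by
      rw [show σ * (r:ℂ)^2 * q = ((r^2:ℝ):ℂ) * (σ * q) by push_cast; ring]
      exact Complex.re_ofReal_mul _ _
    rw [h5]; ring
  have e2 : ‖1 + σ*q‖^2 = 1 + ‖σ‖^2*‖q‖^2 + 2*(σ*q).re := by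
    simp only [Complex.sq_norm, Complex.normSq_add, Complex.normSq_mul,
      Complex.normSq_one, one_mul]
    rw [Complex.conj_re]
  rw [e1, e2]
  have hx : -(‖σ‖*‖q‖) ≤ (σ*q).re := by
    have := (abs_le.1 (Complex.abs_re_le_norm (σ*q))).1
    rw [norm_mul] at this; linarith
  have := K11_aux_real ‖σ‖ ‖q‖ r ((σ*q).re) (norm_nonneg _) hs (norm_nonneg _) hq hr hx
  linarith

lemma K11_final_real (N D ε : ℝ) (hN0 : 0 ≤ N) (hD0 : 0 ≤ D) (hD2 : D ≤ 2)
    (hε0 : 0 < ε) (hε1 : ε ≤ 1) (hsq : N^2 + ε ≤ D^2) : N ≤ (1 - ε/8)*D := by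
  have hB0 : (0:ℝ) ≤ (1 - ε/8) * D := mul_nonneg (by linarith) hD0
  have h4D : (0:ℝ) ≤ 4 - D^2 := by nlinarith
  have hBB : N^2 ≤ ((1 - ε/8) * D)^2 := by
    nlinarith [mul_nonneg hε0.le h4D, sq_nonneg (ε * D)]
  have h := Real.sqrt_le_sqrt hBB
  rwa [Real.sqrt_sq hN0, Real.sqrt_sq hB0] at h

set_option maxHeartbeats 1000000 in
lemma K11_torus (c01 c10 σ z w : ℂ) (r : ℝ) (hr0 : 0 < r) (hr1 : r < 1)
    (hab : ‖c10‖ + ‖c01‖ ≤ 2) (hs : ‖σ‖ ≤ 1) (hz : ‖z‖ = r) (hw : ‖w‖ = r) :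
    ‖(c10 * z / 2 + c01 * w / 2 + σ * z * w) /
      (1 + σ * (conj c01 * z / 2 + conj c10 * w / 2))‖ ≤ 1 - (1-r^2)*(1-r)^2/8 := by
  have hnum : c10 * z / 2 + c01 * w / 2 + σ * z * w
      = (c10/2)*z + (c01/2)*w + σ*z*w := by ring
  have hden : 1 + σ * (conj c01 * z / 2 + conj c10 * w / 2)
      = 1 + σ * (conj (c01/2) * z + conj (c10/2) * w) := by
    rw [map_div₀, map_div₀]; simp only [Complex.conj_ofNat]; ring
  have hq : ‖conj (c01/2) * z + conj (c10/2) * w‖ ≤ r := by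
    calc ‖conj (c01/2) * z + conj (c10/2) * w‖ ≤ ‖conj (c01/2) * z‖ + ‖conj (c10/2) * w‖ :=
      norm_add_le _ _
    _ = ‖c01‖/2*r + ‖c10‖/2*r := by
      rw [norm_mul, norm_mul, RCLike.norm_conj, RCLike.norm_conj, hz, hw, norm_div, norm_div]
      norm_num
    _ ≤ r := by nlinarith
  have key := K11_one_var σ (conj (c01/2) * z + conj (c10/2) * w) r hr0.le hs hq hr1.le
  rw [← K11_num_eq (c10/2) (c01/2) σ z w r hz hw hr0] at key
  have hD2 : ‖1 + σ * (conj (c01/2) * z + conj (c10/2) * w)‖ ≤ 2 := by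
    calc ‖1 + σ * (conj (c01/2) * z + conj (c10/2) * w)‖
        ≤ ‖(1:ℂ)‖ + ‖σ * (conj (c01/2) * z + conj (c10/2) * w)‖ := norm_add_le _ _
    _ ≤ 1 + 1*r := by rw [norm_one, norm_mul]; gcongr
    _ ≤ 2 := by linarith
  rw [hnum, hden, norm_div]
  have hN0 : (0:ℝ) ≤ ‖(c10/2)*z + (c01/2)*w + σ*z*w‖ := norm_nonneg _
  have hD0 : (0:ℝ) ≤ ‖1 + σ * (conj (c01/2) * z + conj (c10/2) * w)‖ := norm_nonneg _
  set N := ‖(c10/2)*z + (c01/2)*w + σ*z*w‖ with hNdef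
  set D := ‖1 + σ * (conj (c01/2) * z + conj (c10/2) * w)‖ with hDdef
  clear_value N D
  clear hq hnum hden hNdef hDdef
  have hε0 : 0 < (1-r^2)*(1-r)^2 := mul_pos (by nlinarith) (pow_pos (by linarith) 2)
  have hε1 : (1-r^2)*(1-r)^2 ≤ 1 := by nlinarith
  have h15 : (1-r)^2 ≤ (1-r*‖σ‖)^2 := by
    have h16 : 0 ≤ r - r*‖σ‖ := by nlinarith [norm_nonneg σ]
    have h17 : 0 ≤ 2 - r - r*‖σ‖ := by nlinarith [norm_nonneg σ]
    nlinarith [mul_nonneg h16 h17]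
  have hsq : N^2 + (1-r^2)*(1-r)^2 ≤ D^2 := by
    have h18 : (0:ℝ) ≤ 1 - r^2 := by nlinarith
    nlinarith [key, mul_nonneg h18 (sub_nonneg.2 h15)]
  have hNle := K11_final_real _ _ _ hN0 hD0 hD2 hε0 hε1 hsq
  have hDne : (0:ℝ) < D := by nlinarith [hsq, hε0, sq_nonneg N, sq_nonneg D]
  rw [div_le_iff₀ hDne]
  exact hNle

lemma K11_den_ne (c01 c10 σ z w : ℂ) (hab : ‖c10‖ + ‖c01‖ ≤ 2) (hs : ‖σ‖ ≤ 1)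
    (hz : ‖z‖ < 1) (hw : ‖w‖ < 1) :
    1 + σ * (conj c01 * z / 2 + conj c10 * w / 2) ≠ 0 := by
  intro h
  have hm : ‖σ * (conj c01 * z / 2 + conj c10 * w / 2)‖ < 1 := by
    have h1 : ‖σ * (conj c01 * z / 2 + conj c10 * w / 2)‖
        ≤ 1 * (‖c01‖*‖z‖/2 + ‖c10‖*‖w‖/2) := by
      rw [norm_mul]
      gcongr
      calc ‖conj c01 * z / 2 + conj c10 * w / 2‖
          ≤ ‖conj c01 * z / 2‖ + ‖conj c10 * w / 2‖ := norm_add_le _ _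
      _ = ‖c01‖*‖z‖/2 + ‖c10‖*‖w‖/2 := by
        simp [norm_div, norm_mul, RCLike.norm_conj]
    have hzM : ‖z‖ ≤ max ‖z‖ ‖w‖ := le_max_left _ _
    have hwM : ‖w‖ ≤ max ‖z‖ ‖w‖ := le_max_right _ _
    have hM1 : max ‖z‖ ‖w‖ < 1 := max_lt hz hw
    have hM0 : 0 ≤ max ‖z‖ ‖w‖ := le_trans (norm_nonneg z) hzM
    nlinarith [norm_nonneg c01, norm_nonneg c10, norm_nonneg z, norm_nonneg w,
      mul_le_mul_of_nonneg_left hzM (norm_nonneg c01),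
      mul_le_mul_of_nonneg_left hwM (norm_nonneg c10),
      mul_le_mul_of_nonneg_right hab hM0]
  have h2 : σ * (conj c01 * z / 2 + conj c10 * w / 2) = -1 := by linear_combination h
  rw [h2] at hm
  simp at hm

lemma K11_gbound (c01 c10 σ : ℂ) (hab : ‖c10‖ + ‖c01‖ ≤ 2) (hs : ‖σ‖ ≤ 1)
    (g : ℂ → ℂ → ℂ)
    (hg : ∀ z w : ℂ, g z w =
      (c10 * z / 2 + c01 * w / 2 + σ * z * w) /
        (1 + σ * (conj c01 * z / 2 + conj c10 * w / 2)))
    (r : ℝ) (hr0 : 0 < r) (hr1 : r < 1) :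
    ∀ z w : ℂ, ‖z‖ ≤ r → ‖w‖ ≤ r → ‖g z w‖ ≤ 1 - (1-r^2)*(1-r)^2/8 := by
  have step1 : ∀ z : ℂ, ‖z‖ = r → ∀ w : ℂ, ‖w‖ ≤ r →
      ‖g z w‖ ≤ 1 - (1-r^2)*(1-r)^2/8 := by
    intro z hzr w hwr
    have hz1 : ‖z‖ < 1 := by rw [hzr]; exact hr1
    have hd : DiffContOnCl ℂ (fun w => g z w) (Metric.ball 0 r) := by
      apply DifferentiableOn.diffContOnCl
      rw [closure_ball (0:ℂ) hr0.ne']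
      intro w' hw'
      have hw'1 : ‖w'‖ < 1 := by
        rw [Metric.mem_closedBall, dist_zero_right] at hw'; linarith
      apply DifferentiableAt.differentiableWithinAt
      have heq : (fun w => g z w) = fun w => (c10 * z / 2 + c01 * w / 2 + σ * z * w) /
          (1 + σ * (conj c01 * z / 2 + conj c10 * w / 2)) := funext (hg z)
      rw [heq]
      exact DifferentiableAt.div (by fun_prop) (by fun_prop)
        (K11_den_ne c01 c10 σ z w' hab hs hz1 hw'1)
    apply Complex.norm_le_of_forall_mem_frontier_norm_le Metric.isBounded_ball hd
    · intro w' hw'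
      rw [frontier_ball (0:ℂ) hr0.ne'] at hw'
      have hw'r : ‖w'‖ = r := by rwa [mem_sphere_iff_norm, sub_zero] at hw'
      rw [hg]
      exact K11_torus c01 c10 σ z w' r hr0 hr1 hab hs hzr hw'r
    · rw [closure_ball (0:ℂ) hr0.ne', Metric.mem_closedBall, dist_zero_right]; exact hwr
  intro z w hzr hwr
  have hw1 : ‖w‖ < 1 := lt_of_le_of_lt hwr hr1
  have hd : DiffContOnCl ℂ (fun z => g z w) (Metric.ball 0 r) := by
    apply DifferentiableOn.diffContOnCl
    rw [closure_ball (0:ℂ) hr0.ne']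
    intro z' hz'
    have hz'1 : ‖z'‖ < 1 := by
      rw [Metric.mem_closedBall, dist_zero_right] at hz'; linarith
    apply DifferentiableAt.differentiableWithinAt
    have heq : (fun z => g z w) = fun z => (c10 * z / 2 + c01 * w / 2 + σ * z * w) /
        (1 + σ * (conj c01 * z / 2 + conj c10 * w / 2)) := funext (fun z => hg z w)
    rw [heq]
    exact DifferentiableAt.div (by fun_prop) (by fun_prop)
      (K11_den_ne c01 c10 σ z' w hab hs hz'1 hw1)
  apply Complex.norm_le_of_forall_mem_frontier_norm_le Metric.isBounded_ball hd
  · intro z' hz'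
    rw [frontier_ball (0:ℂ) hr0.ne'] at hz'
    have hz'r : ‖z'‖ = r := by rwa [mem_sphere_iff_norm, sub_zero] at hz'
    exact step1 z' hz'r w hwr
  · rw [closure_ball (0:ℂ) hr0.ne', Metric.mem_closedBall, dist_zero_right]; exact hzr

lemma K11_affine (A B x : ℂ) : HasDerivAt (fun z : ℂ => A*z + B) A x := by
  simpa using ((hasDerivAt_id x).const_mul A).add_const B

lemma K11_frac (X Dc S P : ℂ) (hDc : Dc ≠ 0) (hP : S + P = 2*Dc) :
    (X/Dc^2 * (S/Dc) - P/Dc * -(X/Dc^2)) / (S/Dc)^2 = 2*X/S^2 := by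
  have e : X/Dc^2 * (S/Dc) - P/Dc * -(X/Dc^2) = 2*X/Dc^2 := by
    field_simp
    linear_combination X * hP
  rw [e, div_pow, div_div_eq_mul_div]
  rw [div_mul_cancel₀ _ (pow_ne_zero 2 hDc)]

lemma K11_slice (c01 c10 σ : ℂ) (g φ : ℂ → ℂ → ℂ)
    (hg : ∀ z w : ℂ, g z w =
      (c10 * z / 2 + c01 * w / 2 + σ * z * w) /
        (1 + σ * (conj c01 * z / 2 + conj c10 * w / 2)))
    (hφ : ∀ z w : ℂ, φ z w = (1 + g z w) / (1 - g z w))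
    (w : ℂ) (hden : 1 + σ * (conj c01 * 0 / 2 + conj c10 * w / 2) ≠ 0)
    (hone : 1 - g 0 w ≠ 0) :
    deriv (fun z => φ z w) 0
      = 2 * ((c10/2 + σ*w) * (1 + σ*conj c10*w/2) - (c01*w/2) * (σ*conj c01/2)) /
        (1 + σ*conj c10*w/2 - c01*w/2)^2 := by
  have hnum : HasDerivAt (fun z : ℂ => c10*z/2 + c01*w/2 + σ*z*w) (c10/2 + σ*w) 0 := by
    rw [show (fun z : ℂ => c10*z/2 + c01*w/2 + σ*z*w)
      = (fun z => (c10/2 + σ*w)*z + c01*w/2) from funext fun z => by ring]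
    exact K11_affine _ _ 0
  have hdenD : HasDerivAt (fun z : ℂ => 1 + σ*(conj c01*z/2 + conj c10*w/2)) (σ*conj c01/2) 0 := by
    rw [show (fun z : ℂ => 1 + σ*(conj c01*z/2 + conj c10*w/2))
      = (fun z => (σ*conj c01/2)*z + (1 + σ*conj c10*w/2)) from funext fun z => by ring]
    exact K11_affine _ _ 0
  have hgg := hnum.fun_div hdenD hden
  rw [show (fun z => (c10*z/2 + c01*w/2 + σ*z*w) / (1 + σ*(conj c01*z/2 + conj c10*w/2)))
      = fun z => g z w from funext fun z => (hg z w).symm] at hgg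
  have hg0 : g 0 w = (c10*0/2 + c01*w/2 + σ*0*w) /
      (1 + σ * (conj c01 * 0 / 2 + conj c10 * w / 2)) := hg 0 w
  have h1 : HasDerivAt (fun z => 1 + g z w) _ 0 := hgg.const_add 1
  have h2 : HasDerivAt (fun z => 1 - g z w) _ 0 := hgg.const_sub 1
  have hφd := h1.fun_div h2 hone
  rw [show (fun z => (1 + g z w) / (1 - g z w)) = fun z => φ z w
    from funext fun z => (hφ z w).symm] at hφd
  rw [hφd.deriv]
  have hD0ne : (1:ℂ) + σ*conj c10*w/2 ≠ 0 := by
    intro h0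
    exact hden ((by ring : (1:ℂ) + σ * (conj c01 * 0 / 2 + conj c10 * w / 2)
      = 1 + σ*conj c10*w/2).trans h0)
  have hg0' := hg 0 w
  rw [show c10*0/2 + c01*w/2 + σ*0*w = c01*w/2 by ring,
    show (1:ℂ) + σ*(conj c01*0/2 + conj c10*w/2) = 1 + σ*conj c10*w/2 by ring] at hg0'
  have hone' : (1:ℂ) + σ*conj c10*w/2 - c01*w/2 ≠ 0 := by
    intro h0
    apply hone
    rw [hg0', show (1:ℂ) + σ*conj c10*w/2 = c01*w/2 by linear_combination h0]
    have hc : c01*w/2 ≠ 0 := by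
      intro hc0
      apply hD0ne
      rw [show (1:ℂ) + σ*conj c10*w/2 = c01*w/2 by linear_combination h0, hc0]
    rw [div_self hc, sub_self]
  have h1mg : 1 - g 0 w = ((1:ℂ) + σ*conj c10*w/2 - c01*w/2)/(1 + σ*conj c10*w/2) := by
    rw [hg0', ← div_sub_div_same, div_self hD0ne]
  have h1pg : 1 + g 0 w = ((1:ℂ) + σ*conj c10*w/2 + c01*w/2)/(1 + σ*conj c10*w/2) := by
    rw [hg0', add_div, div_self hD0ne]
  rw [show c10*0/2 + c01*w/2 + σ*0*w = c01*w/2 by ring,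
    show (1:ℂ) + σ*(conj c01*0/2 + conj c10*w/2) = 1 + σ*conj c10*w/2 by ring,
    h1mg, h1pg]
  exact K11_frac _ _ _ _ hD0ne (by ring)

lemma K11_wslice (c01 c10 σ : ℂ) (g φ : ℂ → ℂ → ℂ)
    (hg : ∀ z w : ℂ, g z w =
      (c10 * z / 2 + c01 * w / 2 + σ * z * w) /
        (1 + σ * (conj c01 * z / 2 + conj c10 * w / 2)))
    (hφ : ∀ z w : ℂ, φ z w = (1 + g z w) / (1 - g z w)) :
    deriv (fun w => φ 0 w) 0 = c01 := by
  have hdne : (1:ℂ) + σ*(conj c01*0/2 + conj c10*(0:ℂ)/2) ≠ 0 := by norm_num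
  have hnum : HasDerivAt (fun w : ℂ => c10*0/2 + c01*w/2 + σ*0*w) (c01/2) 0 := by
    rw [show (fun w : ℂ => c10*0/2 + c01*w/2 + σ*0*w)
      = (fun w => (c01/2)*w + 0) from funext fun w => by ring]
    exact K11_affine _ _ 0
  have hden : HasDerivAt (fun w : ℂ => 1 + σ*(conj c01*0/2 + conj c10*w/2)) (σ*conj c10/2) 0 := by
    rw [show (fun w : ℂ => 1 + σ*(conj c01*0/2 + conj c10*w/2))
      = (fun w => (σ*conj c10/2)*w + 1) from funext fun w => by ring]
    exact K11_affine _ _ 0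
  have hgg := hnum.fun_div hden hdne
  rw [show (fun w => (c10*0/2 + c01*w/2 + σ*0*w) / (1 + σ*(conj c01*0/2 + conj c10*w/2)))
      = fun w => g 0 w from funext fun w => (hg 0 w).symm] at hgg
  have hg00 : g 0 0 = 0 := by rw [hg]; simp
  have hone : 1 - g 0 0 ≠ 0 := by rw [hg00]; norm_num
  have h1 : HasDerivAt (fun w => 1 + g 0 w) _ 0 := hgg.const_add 1
  have h2 : HasDerivAt (fun w => 1 - g 0 w) _ 0 := hgg.const_sub 1
  have hφd := h1.fun_div h2 hone
  rw [show (fun w => (1 + g 0 w) / (1 - g 0 w)) = fun w => φ 0 w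
    from funext fun w => (hφ 0 w).symm] at hφd
  rw [hφd.deriv, hg00]
  norm_num

lemma K11_Fderiv (c01 c10 c11 σ : ℂ)
    (hkey : σ * ((4:ℂ) - (‖c10‖^2:ℝ) - (‖c01‖^2:ℝ)) = 2*(c11 - c10*c01)) :
    deriv (fun w : ℂ => 2*((c10/2 + σ*w)*(1 + σ*conj c10*w/2) - (c01*w/2)*(σ*conj c01/2))
      / (1 + σ*conj c10*w/2 - c01*w/2)^2) 0 = c11 := by
  have hA : HasDerivAt (fun w : ℂ => c10/2 + σ*w) σ 0 := by
    rw [show (fun w : ℂ => c10/2 + σ*w) = (fun w => σ*w + c10/2) from funext fun w => by ring]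
    exact K11_affine _ _ 0
  have hB : HasDerivAt (fun w : ℂ => 1 + σ*conj c10*w/2) (σ*conj c10/2) 0 := by
    rw [show (fun w : ℂ => 1 + σ*conj c10*w/2)
      = (fun w => (σ*conj c10/2)*w + 1) from funext fun w => by ring]
    exact K11_affine _ _ 0
  have hC : HasDerivAt (fun w : ℂ => (c01*w/2)*(σ*conj c01/2)) ((c01/2)*(σ*conj c01/2)) 0 := by
    rw [show (fun w : ℂ => (c01*w/2)*(σ*conj c01/2))
      = (fun w => ((c01/2)*(σ*conj c01/2))*w + 0) from funext fun w => by ring]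
    exact K11_affine _ _ 0
  have hT := ((hA.fun_mul hB).fun_sub hC).const_mul (2:ℂ)
  have hin : HasDerivAt (fun w : ℂ => 1 + σ*conj c10*w/2 - c01*w/2) (σ*conj c10/2 - c01/2) 0 := by
    rw [show (fun w : ℂ => 1 + σ*conj c10*w/2 - c01*w/2)
      = (fun w => (σ*conj c10/2 - c01/2)*w + 1) from funext fun w => by ring]
    exact K11_affine _ _ 0
  have hU := hin.fun_pow 2
  have hF := hT.fun_div hU (by norm_num : ((1:ℂ) + σ*conj c10*(0:ℂ)/2 - c01*(0:ℂ)/2)^2 ≠ 0)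
  rw [hF.deriv]
  have hc10 : c10 * conj c10 = ((‖c10‖^2:ℝ):ℂ) := by
    rw [Complex.mul_conj]; norm_cast; rw [Complex.normSq_eq_norm_sq]
  have hc01 : c01 * conj c01 = ((‖c01‖^2:ℝ):ℂ) := by
    rw [Complex.mul_conj]; norm_cast; rw [Complex.normSq_eq_norm_sq]
  linear_combination (1/2)*hkey + (-σ/2)*hc10 + (-σ/2)*hc01

/-- Sufficiency part of the description of `K₁₁` for the bidisk: under the two
inequalities, the explicit rational function `g` is a Schur function on `D²`
and its Cayley transform `φ = (1+g)/(1-g)` is Herglotz–Nevanlinna with the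
prescribed Taylor coefficients up to multi-degree `(1,1)`. -/
theorem K11_sufficiency (c01 c10 c11 : ℂ)
    (h1 : 2 * ‖c11 - c10 * c01‖ + ‖c10‖ ^ 2 + ‖c01‖ ^ 2 ≤ 4)
    (h2 : ‖c10‖ + ‖c01‖ ≤ 2)
    (h3 : ‖c01‖ ^ 2 + ‖c10‖ ^ 2 < 4)
    (σ : ℂ) (hσ : σ = 2 * (c11 - c10 * c01) / ((4 : ℂ) - (‖c10‖ ^ 2 : ℝ) - (‖c01‖ ^ 2 : ℝ)))
    (g : ℂ → ℂ → ℂ)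
    (hg : ∀ z w : ℂ, g z w =
      (c10 * z / 2 + c01 * w / 2 + σ * z * w) /
        (1 + σ * (conj c01 * z / 2 + conj c10 * w / 2)))
    (φ : ℂ → ℂ → ℂ) (hφ : ∀ z w : ℂ, φ z w = (1 + g z w) / (1 - g z w)) :
    DifferentiableOn ℂ (fun x : ℂ × ℂ => g x.1 x.2)
        {x : ℂ × ℂ | ‖x.1‖ < 1 ∧ ‖x.2‖ < 1} ∧
    (∀ z w : ℂ, ‖z‖ < 1 → ‖w‖ < 1 → ‖g z w‖ ≤ 1) ∧
    DifferentiableOn ℂ (fun x : ℂ × ℂ => φ x.1 x.2)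
        {x : ℂ × ℂ | ‖x.1‖ < 1 ∧ ‖x.2‖ < 1} ∧
    (∀ z w : ℂ, ‖z‖ < 1 → ‖w‖ < 1 → 0 ≤ (φ z w).re) ∧
    φ 0 0 = 1 ∧
    deriv (fun z => φ z 0) 0 = c10 ∧
    deriv (fun w => φ 0 w) 0 = c01 ∧
    deriv (fun w => deriv (fun z => φ z w) 0) 0 = c11 := by
  have hY : (0:ℝ) < 4 - ‖c10‖^2 - ‖c01‖^2 := by nlinarith [h3]
  have hcastY : ((4:ℂ) - (‖c10‖^2:ℝ) - (‖c01‖^2:ℝ))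
      = ((4 - ‖c10‖^2 - ‖c01‖^2 : ℝ):ℂ) := by push_cast; ring
  have hYne : ((4:ℂ) - (‖c10‖^2:ℝ) - (‖c01‖^2:ℝ)) ≠ 0 := by
    rw [hcastY]; exact_mod_cast hY.ne'
  have hs : ‖σ‖ ≤ 1 := by
    rw [hσ, hcastY, norm_div, Complex.norm_real, Real.norm_eq_abs, abs_of_pos hY, div_le_one hY]
    have h2n : ‖(2:ℂ) * (c11 - c10*c01)‖ = 2 * ‖c11 - c10*c01‖ := by
      rw [norm_mul]; norm_num
    rw [h2n]; linarith
  have hkey : σ * ((4:ℂ) - (‖c10‖^2:ℝ) - (‖c01‖^2:ℝ)) = 2*(c11 - c10*c01) := by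
    rw [hσ, div_mul_cancel₀ _ hYne]
  have hgstrict : ∀ z w : ℂ, ‖z‖ < 1 → ‖w‖ < 1 → ‖g z w‖ < 1 := by
    intro z w hz hw
    set M := max ‖z‖ ‖w‖ with hM
    have hM0 : 0 ≤ M := le_trans (norm_nonneg z) (le_max_left _ _)
    have hM1 : M < 1 := max_lt hz hw
    have hr0 : 0 < (M+1)/2 := by linarith
    have hr1 : (M+1)/2 < 1 := by linarith
    have hzr : ‖z‖ ≤ (M+1)/2 := le_trans (le_max_left _ _) (by rw [← hM]; linarith)
    have hwr : ‖w‖ ≤ (M+1)/2 := le_trans (le_max_right _ _) (by rw [← hM]; linarith)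
    have hb := K11_gbound c01 c10 σ h2 hs g hg ((M+1)/2) hr0 hr1 z w hzr hwr
    have hε : 0 < (1-((M+1)/2)^2)*(1-(M+1)/2)^2/8 := by
      have h1' : 0 < 1 - ((M+1)/2)^2 := by nlinarith
      have h2' : 0 < (1-(M+1)/2)^2 := pow_pos (by linarith) 2
      positivity
    linarith
  have hgd : ∀ x : ℂ × ℂ, ‖x.1‖ < 1 → ‖x.2‖ < 1 →
      DifferentiableAt ℂ (fun x : ℂ × ℂ => g x.1 x.2) x := by
    intro x hx1 hx2
    rw [show (fun x : ℂ × ℂ => g x.1 x.2) = fun x : ℂ × ℂ =>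
      (c10 * x.1 / 2 + c01 * x.2 / 2 + σ * x.1 * x.2) /
        (1 + σ * (conj c01 * x.1 / 2 + conj c10 * x.2 / 2)) from funext fun x => hg x.1 x.2]
    simp only [div_eq_mul_inv]
    exact (by fun_prop : DifferentiableAt ℂ (fun x : ℂ × ℂ =>
        c10 * x.1 / 2 + c01 * x.2 / 2 + σ * x.1 * x.2) x).mul
      ((by fun_prop : DifferentiableAt ℂ (fun x : ℂ × ℂ =>
        1 + σ * (conj c01 * x.1 / 2 + conj c10 * x.2 / 2)) x).inv
        (K11_den_ne c01 c10 σ x.1 x.2 h2 hs hx1 hx2))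
  have honene : ∀ z w : ℂ, ‖z‖ < 1 → ‖w‖ < 1 → 1 - g z w ≠ 0 := by
    intro z w hz hw h0
    have hlt := hgstrict z w hz hw
    rw [show g z w = 1 by linear_combination -h0] at hlt
    norm_num at hlt
  have h01 : ‖(0:ℂ)‖ < 1 := by simp
  refine ⟨?_, ?_, ?_, ?_, ?_, ?_, ?_, ?_⟩
  · intro x hx
    exact (hgd x hx.1 hx.2).differentiableWithinAt
  · intro z w hz hw; exact (hgstrict z w hz hw).le
  · intro x hx
    apply DifferentiableAt.differentiableWithinAt
    rw [show (fun x : ℂ × ℂ => φ x.1 x.2) = fun x : ℂ × ℂ =>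
      (1 + g x.1 x.2)/(1 - g x.1 x.2) from funext fun x => hφ x.1 x.2]
    simp only [div_eq_mul_inv]
    exact ((hgd x hx.1 hx.2).const_add 1).mul
      (((hgd x hx.1 hx.2).const_sub 1).inv (honene x.1 x.2 hx.1 hx.2))
  · intro z w hz hw
    rw [hφ]
    have hlt : Complex.normSq (g z w) < 1 := by
      rw [Complex.normSq_eq_norm_sq]
      nlinarith [hgstrict z w hz hw, norm_nonneg (g z w)]
    rw [Complex.div_re, ← add_div]
    apply div_nonneg _ (Complex.normSq_nonneg _)
    rw [Complex.normSq_apply] at hlt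
    simp only [Complex.add_re, Complex.sub_re, Complex.one_re, Complex.add_im,
      Complex.sub_im, Complex.one_im]
    nlinarith [hlt]
  · rw [hφ, (by rw [hg]; simp : g 0 0 = 0)]; norm_num
  · have hsl := K11_slice c01 c10 σ g φ hg hφ 0
      (K11_den_ne c01 c10 σ 0 0 h2 hs h01 h01) (honene 0 0 h01 h01)
    rw [hsl]; norm_num; ring
  · exact K11_wslice c01 c10 σ g φ hg hφ
  · have hev : (fun w => deriv (fun z => φ z w) 0) =ᶠ[nhds 0]
        (fun w : ℂ => 2*((c10/2 + σ*w)*(1 + σ*conj c10*w/2) - (c01*w/2)*(σ*conj c01/2))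
          / (1 + σ*conj c10*w/2 - c01*w/2)^2) := by
      filter_upwards [Metric.ball_mem_nhds (0:ℂ) one_pos] with w hw
      have hw1 : ‖w‖ < 1 := by rwa [Metric.mem_ball, dist_zero_right] at hw
      exact K11_slice c01 c10 σ g φ hg hφ w
        (K11_den_ne c01 c10 σ 0 w h2 hs h01 hw1) (honene 0 w h01 hw1)
    rw [hev.deriv_eq]
    exact K11_Fderiv c01 c10 c11 σ hkey
end

section
/- Necessity of the K₁₁ conditions: if φ is holomorphic on the bidisk D² with Re φ ≥ 0, φ(0,0) = 1, and Taylor coefficients c₀₁ = ∂φ/∂w(0), c₁₀ = ∂φ/∂z(0), then |c₁₀| + |c₀₁| ≤ 2. -/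
open Metric Complex Set

lemma one_var_caratheodory (f : ℂ → ℂ) (hd : DifferentiableOn ℂ f (ball (0:ℂ) 1))
    (hre : ∀ z ∈ ball (0:ℂ) 1, 0 ≤ (f z).re) (h0 : f 0 = 1) :
    ‖deriv f 0‖ ≤ 2 := by
  set g : ℂ → ℂ := fun z => (f z - 1) / (f z + 1) with hg
  have hne : ∀ z ∈ ball (0:ℂ) 1, f z + 1 ≠ 0 := by
    intro z hz h
    have h2 : (f z + 1).re = 0 := by rw [h]; simp
    have h1 := hre z hz
    simp only [Complex.add_re, Complex.one_re] at h2
    linarith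
  have hgd : DifferentiableOn ℂ g (ball (0:ℂ) 1) :=
    (hd.sub (differentiableOn_const 1)).div (hd.add (differentiableOn_const 1)) hne
  have hgb : ∀ z ∈ ball (0:ℂ) 1, ‖g z‖ ≤ 1 := by
    intro z hz
    have hpos : 0 < ‖f z + 1‖ := norm_pos_iff.mpr (hne z hz)
    rw [hg]
    simp only [norm_div]
    rw [div_le_one hpos]
    have h1 := hre z hz
    have hsq : Complex.normSq (f z - 1) ≤ Complex.normSq (f z + 1) := by
      simp only [Complex.normSq_apply, Complex.sub_re, Complex.sub_im, Complex.add_re,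
        Complex.add_im, Complex.one_re, Complex.one_im]
      nlinarith
    have := Real.sqrt_le_sqrt hsq
    simpa [Complex.norm_def] using this
  have hg0 : g 0 = 0 := by simp [hg, h0]
  have hga : ∀ r : ℝ, 0 < r → r < 1 → ∀ ε : ℝ, 0 < ε → ‖deriv g 0‖ ≤ (1 + ε) / r := by
    intro r hr hr1 ε hε
    apply norm_deriv_le_div_of_mapsTo_ball (hgd.mono (ball_subset_ball hr1.le)) _ hr
    intro z hz
    have hz1 : z ∈ ball (0:ℂ) 1 := ball_subset_ball hr1.le hz
    rw [hg0, mem_closedBall, dist_zero_right]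
    exact le_trans (hgb z hz1) (by linarith)
  have hgnorm : ‖deriv g 0‖ ≤ 1 := by
    apply le_of_forall_pos_le_add
    intro ε hε
    have hr : (0:ℝ) < 1 / (1 + ε) := by positivity
    have hr1 : 1 / (1 + ε) < 1 := by
      rw [div_lt_one (by linarith)]; linarith
    apply le_of_forall_pos_le_add
    intro ε' hε'
    have hεr : 0 < ε' * (1 / (1 + ε)) := by positivity
    have := hga _ hr hr1 _ hεr
    calc ‖deriv g 0‖ ≤ (1 + ε' * (1 / (1 + ε))) / (1 / (1 + ε)) := this
      _ = (1 + ε) + ε' := by field_simp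
  -- now compute deriv g 0 = deriv f 0 / 2
  have hfd : DifferentiableAt ℂ f 0 :=
    hd.differentiableAt (isOpen_ball.mem_nhds (by simp))
  have hf' : HasDerivAt f (deriv f 0) 0 := hfd.hasDerivAt
  have hne0 : f 0 + 1 ≠ 0 := hne 0 (by simp)
  have hg' : HasDerivAt g ((deriv f 0 * (f 0 + 1) - (f 0 - 1) * deriv f 0) / (f 0 + 1) ^ 2) 0 :=
    (hf'.sub_const 1).div (hf'.add_const 1) hne0
  have hval : (deriv f 0 * (f 0 + 1) - (f 0 - 1) * deriv f 0) / (f 0 + 1) ^ 2 = deriv f 0 / 2 := by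
    rw [h0]; ring_nf
  rw [hval] at hg'
  have : ‖deriv f 0 / 2‖ ≤ 1 := hg'.deriv ▸ hgnorm
  rw [norm_div] at this
  have h2 : ‖(2:ℂ)‖ = 2 := by norm_num
  rw [h2] at this
  linarith

/-- Necessity of the `K₁₁` condition `|c₁₀| + |c₀₁| ≤ 2` for a normalized
Herglotz–Nevanlinna function on the bidisk. -/
theorem K11_necessity (φ : ℂ → ℂ → ℂ)
    (hφ : DifferentiableOn ℂ (fun x : ℂ × ℂ => φ x.1 x.2)
        {x : ℂ × ℂ | ‖x.1‖ < 1 ∧ ‖x.2‖ < 1})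
    (hre : ∀ z w : ℂ, ‖z‖ < 1 → ‖w‖ < 1 → 0 ≤ (φ z w).re)
    (h0 : φ 0 0 = 1)
    (c10 c01 : ℂ)
    (hc10 : deriv (fun z => φ z 0) 0 = c10)
    (hc01 : deriv (fun w => φ 0 w) 0 = c01) :
    ‖c10‖ + ‖c01‖ ≤ 2 := by
  set S : Set (ℂ × ℂ) := {x : ℂ × ℂ | ‖x.1‖ < 1 ∧ ‖x.2‖ < 1} with hS
  have hSopen : IsOpen S := by
    have : S = (ball (0:ℂ) 1) ×ˢ (ball (0:ℂ) 1) := by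
      ext x; simp [hS, mem_ball, dist_zero_right]
    rw [this]
    exact isOpen_ball.prod isOpen_ball
  have h00 : ((0:ℂ), (0:ℂ)) ∈ S := by simp [hS]
  set F : ℂ × ℂ → ℂ := fun x => φ x.1 x.2 with hF
  have hFd : DifferentiableAt ℂ F (0, 0) :=
    hφ.differentiableAt (hSopen.mem_nhds h00)
  set L := fderiv ℂ F (0, 0) with hLdef
  have hL : HasFDerivAt F L (0, 0) := hFd.hasFDerivAt
  -- c10 = L (1, 0)
  have hι1 : HasDerivAt (fun z : ℂ => (z, (0:ℂ))) ((1:ℂ), (0:ℂ)) 0 :=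
    (hasDerivAt_id 0).prodMk (hasDerivAt_const 0 0)
  have hd10 : HasDerivAt (fun z : ℂ => φ z 0) (L (1, 0)) 0 := by
    have h : HasDerivAt (F ∘ (fun z : ℂ => (z, (0:ℂ)))) (L (1, 0)) 0 :=
      HasFDerivAt.comp_hasDerivAt 0 (by exact hL) hι1
    simpa [hF, Function.comp_def] using h
  have hc10' : c10 = L (1, 0) := by rw [← hc10, hd10.deriv]
  -- c01 = L (0, 1)
  have hι2 : HasDerivAt (fun w : ℂ => ((0:ℂ), w)) ((0:ℂ), (1:ℂ)) 0 :=
    (hasDerivAt_const 0 0).prodMk (hasDerivAt_id 0)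
  have hd01 : HasDerivAt (fun w : ℂ => φ 0 w) (L (0, 1)) 0 := by
    have h : HasDerivAt (F ∘ (fun w : ℂ => ((0:ℂ), w))) (L (0, 1)) 0 :=
      HasFDerivAt.comp_hasDerivAt 0 (by exact hL) hι2
    simpa [hF, Function.comp_def] using h
  have hc01' : c01 = L (0, 1) := by rw [← hc01, hd01.deriv]
  -- the aligning unimodular constant
  set u : ℂ := if c10 = 0 then 1 else c10 / ‖c10‖ with hu
  set v : ℂ := if c01 = 0 then 1 else (starRingEnd ℂ) c01 / ‖c01‖ with hv
  set lam : ℂ := u * v with hlam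
  have hunorm : ‖u‖ = 1 := by
    by_cases h : c10 = 0
    · simp [hu, h]
    · have hn : ‖c10‖ ≠ 0 := norm_ne_zero_iff.mpr h
      simp [hu, h, norm_div, div_self hn]
  have hvnorm : ‖v‖ = 1 := by
    by_cases h : c01 = 0
    · simp [hv, h]
    · have hn : ‖c01‖ ≠ 0 := norm_ne_zero_iff.mpr h
      simp [hv, h, norm_div, div_self hn]
  have hlamnorm : ‖lam‖ = 1 := by rw [hlam, norm_mul, hunorm, hvnorm, mul_one]
  -- key algebraic identity
  have hkey : c10 + lam * c01 = u * ((‖c10‖ : ℂ) + (‖c01‖ : ℂ)) := by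
    have h1 : c10 = u * (‖c10‖ : ℂ) := by
      by_cases h : c10 = 0
      · simp [hu, h]
      · have : (‖c10‖ : ℂ) ≠ 0 := by
          simpa using norm_ne_zero_iff.mpr h
        rw [hu, if_neg h, div_mul_cancel₀ _ this]
    have h2 : v * c01 = (‖c01‖ : ℂ) := by
      by_cases h : c01 = 0
      · simp [hv, h]
      · have hn : (‖c01‖ : ℂ) ≠ 0 := by
          simpa using norm_ne_zero_iff.mpr h
        rw [hv, if_neg h, div_mul_eq_mul_div, ← Complex.normSq_eq_conj_mul_self]
        rw [show (Complex.normSq c01 : ℂ) = (‖c01‖ : ℂ)^2 by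
          norm_cast; rw [Complex.normSq_eq_norm_sq]]
        rw [sq, mul_div_assoc, div_self hn, mul_one]
    calc c10 + lam * c01 = u * (‖c10‖ : ℂ) + u * (v * c01) := by
          rw [← h1, hlam]; ring
      _ = u * ((‖c10‖ : ℂ) + (‖c01‖ : ℂ)) := by rw [h2]; ring
  -- diagonal slice
  set f : ℂ → ℂ := fun z => φ z (lam * z) with hf
  have hιd : ∀ z : ℂ, ‖z‖ < 1 → (z, lam * z) ∈ S := by
    intro z hz
    refine ⟨hz, ?_⟩
    rw [norm_mul, hlamnorm, one_mul]; exact hz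
  have hfd : DifferentiableOn ℂ f (ball (0:ℂ) 1) := by
    have hι : DifferentiableOn ℂ (fun z : ℂ => (z, lam * z)) (ball (0:ℂ) 1) :=
      (differentiable_id.prodMk (differentiable_id.const_mul lam)).differentiableOn
    exact hφ.comp hι (fun z hz => hιd z (by simpa [mem_ball, dist_zero_right] using hz))
  have hfre : ∀ z ∈ ball (0:ℂ) 1, 0 ≤ (f z).re := by
    intro z hz
    rw [mem_ball, dist_zero_right] at hz
    exact hre z (lam * z) hz (by rw [norm_mul, hlamnorm, one_mul]; exact hz)
  have hf0 : f 0 = 1 := by simp [hf, h0]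
  have hbound := one_var_caratheodory f hfd hfre hf0
  -- deriv f 0 = c10 + lam * c01
  have hιd' : HasDerivAt (fun z : ℂ => (z, lam * z)) ((1:ℂ), lam) 0 := by
    have h2 : HasDerivAt (fun z : ℂ => lam * z) lam 0 := by
      simpa using (hasDerivAt_id (0:ℂ)).const_mul lam
    exact (hasDerivAt_id 0).prodMk h2
  have hfderiv : HasDerivAt f (L (1, lam)) 0 := by
    have h : HasDerivAt (F ∘ (fun z : ℂ => (z, lam * z))) (L (1, lam)) 0 :=
      HasFDerivAt.comp_hasDerivAt 0 (by simpa using hL) hιd'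
    simpa [hF, hf, Function.comp_def] using h
  have hsplit : L (1, lam) = c10 + lam * c01 := by
    have : ((1:ℂ), lam) = ((1:ℂ), (0:ℂ)) + lam • ((0:ℂ), (1:ℂ)) := by
      simp [Prod.ext_iff]
    rw [this, L.map_add, L.map_smul, hc10', hc01', smul_eq_mul]
  rw [hfderiv.deriv, hsplit, hkey] at hbound
  rw [norm_mul, hunorm, one_mul] at hbound
  have : ‖(‖c10‖ : ℂ) + (‖c01‖ : ℂ)‖ = ‖c10‖ + ‖c01‖ := by
    rw [← Complex.ofReal_add, Complex.norm_real]
    exact Real.norm_of_nonneg (by positivity)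
  rwa [this] at hbound
end
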